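/- arXiv:2307.16780 — 3 statements merged into one kernel-verified Lean document; each statement's English description precedes it below -/
import Mathlib

section
/- For simple contrapositive ABFs, any ranking-based semantics satisfying monotony, void precedence and void best rank satisfies Blame: if φ belongs to some minimal inconsistent set, then σ({φ}) is strictly below the best score. -/
def attacks {L : Type*} (Entails : Set L → L → Prop) (neg : L → L)
    (Γ Δ Θ : Set L) : Prop :=
  ∃ ψ ∈ Θ, Entails (Γ ∪ Δ) (neg ψ)

def minIncon {L : Type*} (Entails : Set L → L → Prop) (F : L)
    (Γ Ab Δ : Set L) : Prop :=
  Δ ⊆ Ab ∧ Entails (Γ ∪ Δ) F ∧ ∀ Δ' : Set L, Δ' ⊂ Δ → ¬ Entails (Γ ∪ Δ') F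

/-- monotony + void precedence + void best rank imply Blame. -/
theorem stmt4 {L : Type*} (Entails : Set L → L → Prop) (neg : L → L) (F : L)
    (hRef : ∀ (Γ : Set L) (ψ : L), ψ ∈ Γ → Entails Γ ψ)
    (hMono : ∀ (Γ Γ' : Set L) (ψ : L), Entails Γ ψ → Γ ⊆ Γ' → Entails Γ' ψ)
    (hTrans : ∀ (Γ Γ' : Set L) (ψ φ : L),
      Entails Γ ψ → Entails (Γ' ∪ {ψ}) φ → Entails (Γ ∪ Γ') φ)
    (hFalsity : ∀ ψ : L, Entails {F} ψ)
    (hExpl : ∀ ψ : L, Entails {ψ, neg ψ} F)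
    (Γ Ab : Set L) (σ : Set L → ℝ)
    (hSigmaMono : ∀ a b : Set L, a ⊆ Ab → b ⊆ Ab →
      {Δ : Set L | Δ ⊆ Ab ∧ attacks Entails neg Γ Δ a} ⊆
        {Δ : Set L | Δ ⊆ Ab ∧ attacks Entails neg Γ Δ b} →
      σ b ≤ σ a)
    -- void precedence
    (hVP : ∀ a b : Set L, a ⊆ Ab → b ⊆ Ab →
      {Δ : Set L | Δ ⊆ Ab ∧ attacks Entails neg Γ Δ a}.Nonempty →
      {Δ : Set L | Δ ⊆ Ab ∧ attacks Entails neg Γ Δ b} = ∅ →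
      σ a < σ b)
    -- void best rank with best score r
    (r : ℝ)
    (hVBR : ∀ a : Set L, a ⊆ Ab →
      {Δ : Set L | Δ ⊆ Ab ∧ attacks Entails neg Γ Δ a} = ∅ → σ a = r)
    (φ : L) (Δ : Set L)
    (hMIC : minIncon Entails F Γ Ab Δ) (hφΔ : φ ∈ Δ) :
    σ {φ} < r := by
  obtain ⟨hΔAb, hΔF, _⟩ := hMIC
  -- Γ ∪ Δ entails neg φ
  have h1 : Entails (Γ ∪ Δ) (neg φ) := by
    have h2 : Entails ((∅ : Set L) ∪ {F}) (neg φ) := by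
      have := hFalsity (neg φ)
      apply hMono _ _ _ this
      simp
    have := hTrans (Γ ∪ Δ) ∅ F (neg φ) hΔF h2
    apply hMono _ _ _ this
    simp
  have hφAb : ({φ} : Set L) ⊆ Ab := by
    intro x hx; rw [Set.mem_singleton_iff] at hx; subst hx; exact hΔAb hφΔ
  have hne : {Δ' : Set L | Δ' ⊆ Ab ∧ attacks Entails neg Γ Δ' {φ}}.Nonempty :=
    ⟨Δ, hΔAb, φ, rfl, h1⟩
  have hempty : {Δ' : Set L | Δ' ⊆ Ab ∧ attacks Entails neg Γ Δ' (∅ : Set L)} = ∅ := by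
    ext Δ'
    simp only [Set.mem_setOf_eq, Set.mem_empty_iff_false, iff_false]
    rintro ⟨-, ψ, hψ, -⟩
    exact hψ
  have := hVP {φ} ∅ hφAb (Set.empty_subset Ab) hne hempty
  rwa [hVBR ∅ (Set.empty_subset Ab) hempty] at this
end

section
/- A ranking-based semantics σ satisfies falsity if it satisfies monotony: in any simple contrapositive ABF, if Γ ∪ {φ} ⊢ F for φ ∈ Ab, then σ({φ}) ≤ σ(Δ) for every Δ ⊆ Ab. -/
/-- monotony implies falsity. -/
theorem stmt6 {L : Type*} (Entails : Set L → L → Prop) (neg : L → L) (F : L)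
    (hRef : ∀ (Γ : Set L) (ψ : L), ψ ∈ Γ → Entails Γ ψ)
    (hMono : ∀ (Γ Γ' : Set L) (ψ : L), Entails Γ ψ → Γ ⊆ Γ' → Entails Γ' ψ)
    (hTrans : ∀ (Γ Γ' : Set L) (ψ φ : L),
      Entails Γ ψ → Entails (Γ' ∪ {ψ}) φ → Entails (Γ ∪ Γ') φ)
    (hFalsity : ∀ ψ : L, Entails {F} ψ)
    (hContra : ∀ (Γ : Set L) (ψ φ : L),
      Entails (Γ ∪ {ψ}) φ → Entails (Γ ∪ {neg φ}) (neg ψ))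
    -- contraposition consequence used: Γ ∪ {φ} ⊢ F implies Γ ⊢ ¬φ
    (hContraF : ∀ (Γ : Set L) (φ : L), Entails (Γ ∪ {φ}) F → Entails Γ (neg φ))
    (Γ Ab : Set L) (σ : Set L → ℝ)
    (hSigmaMono : ∀ a b : Set L, a ⊆ Ab → b ⊆ Ab →
      {Δ : Set L | Δ ⊆ Ab ∧ attacks Entails neg Γ Δ a} ⊆
        {Δ : Set L | Δ ⊆ Ab ∧ attacks Entails neg Γ Δ b} →
      σ b ≤ σ a)
    (φ : L) (hφ : φ ∈ Ab) (hInc : Entails (Γ ∪ {φ}) F) :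
    ∀ Δ : Set L, Δ ⊆ Ab → σ {φ} ≤ σ Δ := by
  intro Δ hΔ
  apply hSigmaMono Δ {φ} hΔ (Set.singleton_subset_iff.mpr hφ)
  intro Δ' hΔ'
  exact ⟨hΔ'.1, φ, rfl, hMono Γ (Γ ∪ Δ') (neg φ) (hContraF Γ φ hInc) Set.subset_union_left⟩
end

section
/- In conclusion-support pair argumentation under Def or DirDef attacks, Dominance holds at the level of attacks: if Γ ∪ {ψ} ⊢ φ (with ψ, φ ∈ Ab), then every argument ⟨Δ, δ⟩ attacking ⟨{φ}, φ'⟩ also attacks ⟨{ψ}, ψ'⟩. -/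
inductive ARule
  | defR | dirDef | ucut | canUcut | dirUcut

def equivG {L : Type*} (Entails : Set L → L → Prop) (Γ : Set L)
    (φ ψ : L) : Prop :=
  Entails (Γ ∪ {φ}) ψ ∧ Entails (Γ ∪ {ψ}) φ

def attackR {L : Type*} (Entails : Set L → L → Prop) (neg : L → L)
    (conj : Finset L → L) (Γ : Set L) :
    ARule → Finset L × L → Finset L × L → Prop
  | .defR, a, b => Entails (Γ ∪ {a.2}) (neg (conj b.1))
  | .dirDef, a, b => ∃ δ ∈ b.1, Entails (Γ ∪ {a.2}) (neg δ)
  | .ucut, a, b => ∃ Δ' : Finset L, Δ' ⊆ b.1 ∧ equivG Entails Γ a.2 (neg (conj Δ'))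
  | .canUcut, a, b => equivG Entails Γ a.2 (neg (conj b.1))
  | .dirUcut, a, b => ∃ δ ∈ b.1, equivG Entails Γ a.2 (neg δ)

/-- Dominance at the level of Def/DirDef attacks. -/
theorem stmt16 {L : Type*} [DecidableEq L] (Entails : Set L → L → Prop)
    (neg : L → L) (conj : Finset L → L) (Γ Ab : Set L)
    (hRef : ∀ (Γ : Set L) (χ : L), χ ∈ Γ → Entails Γ χ)
    (hMono : ∀ (Γ Γ' : Set L) (χ : L), Entails Γ χ → Γ ⊆ Γ' → Entails Γ' χ)
    (hTrans : ∀ (Γ Γ' : Set L) (χ ξ : L),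
      Entails Γ χ → Entails (Γ' ∪ {χ}) ξ → Entails (Γ ∪ Γ') ξ)
    (hContra : ∀ (Γ : Set L) (χ ξ : L),
      Entails (Γ ∪ {χ}) ξ → Entails (Γ ∪ {neg ξ}) (neg χ))
    (hConjSingle : ∀ χ : L, conj {χ} = χ)
    (ψ φ : L) (hψ : ψ ∈ Ab) (hφ : φ ∈ Ab)
    (hDed : Entails (Γ ∪ {ψ}) φ)
    (R : ARule) (hR : R = ARule.defR ∨ R = ARule.dirDef)
    (Δ : Finset L) (δ φ' ψ' : L)
    (hArgAtt : Entails (Γ ∪ ↑Δ) δ)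
    (hArgφ : Entails (Γ ∪ ({φ} : Set L)) φ')
    (hArgψ : Entails (Γ ∪ ({ψ} : Set L)) ψ')
    (hatt : attackR Entails neg conj Γ R (Δ, δ) ({φ}, φ')) :
    attackR Entails neg conj Γ R (Δ, δ) ({ψ}, ψ') := by
  have key : ∀ h : Entails (Γ ∪ ({δ} : Set L)) (neg φ),
      Entails (Γ ∪ ({δ} : Set L)) (neg ψ) := by
    intro h
    have h1 : Entails (Γ ∪ {neg φ}) (neg ψ) := hContra Γ ψ φ hDed
    have h2 := hTrans (Γ ∪ {δ}) Γ (neg φ) (neg ψ) h h1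
    exact hMono _ _ _ h2 (by intro x hx; rcases hx with hx | hx
                             · exact hx
                             · exact Or.inl hx)
  rcases hR with rfl | rfl
  · simp only [attackR, hConjSingle] at hatt ⊢
    exact key hatt
  · obtain ⟨d, hd, hE⟩ := hatt
    simp only [Finset.mem_singleton] at hd
    subst hd
    exact ⟨ψ, Finset.mem_singleton_self ψ, key hE⟩
end
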